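/- arXiv:2003.03440 — 3 statements merged into one kernel-verified Lean document; each statement's English description precedes it below -/
import Mathlib

section
/- Let γ > 0 and z ∈ ℂ. Define y* ∈ ℂ by y* = 0 if |z| ≤ γ, and y* = ((|z| − γ)/|z|)·z if |z| > γ (i.e. y* = CS_γ(z), the complex soft-thresholding of z). Then y* is a global minimizer of the function f(y) = γ·|y| + (1/2)·|y − z|² over y ∈ ℂ; that is, for all y ∈ ℂ, γ·|y*| + (1/2)·|y* − z|² ≤ γ·|y| + (1/2)·|y − z|². -/
/-- The complex soft-thresholding `CS_γ(z)` (equal to `0` when `|z| ≤ γ`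
and `((|z| − γ)/|z|)·z` when `|z| > γ`) is a global minimizer of
`f(y) = γ·|y| + (1/2)·|y − z|²` over `ℂ`. -/
theorem complex_soft_thresholding_is_minimizer
    (γ : ℝ) (hγ : 0 < γ) (z : ℂ) (ystar : ℂ)
    (hystar : ystar = if ‖z‖ ≤ γ then 0
      else (((‖z‖ - γ) / ‖z‖ : ℝ) : ℂ) * z) :
    ∀ y : ℂ,
      γ * ‖ystar‖ + (1 / 2) * (‖ystar - z‖) ^ 2 ≤
        γ * ‖y‖ + (1 / 2) * (‖y - z‖) ^ 2 := by
  intro y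
  have hlow : ‖z‖ - ‖y‖ ≤ ‖y - z‖ := by
    have h := norm_sub_norm_le z y
    have h2 : ‖z - y‖ = ‖y - z‖ := by rw [norm_sub_rev]
    simpa [h2] using h
  have hlow2 : ‖y‖ - ‖z‖ ≤ ‖y - z‖ := by
    simpa using norm_sub_norm_le y z
  have hprod : 0 ≤ (‖y - z‖ - (‖z‖ - ‖y‖)) *
      (‖y - z‖ - (‖y‖ - ‖z‖)) :=
    mul_nonneg (by linarith) (by linarith)
  have hy0 : 0 ≤ ‖y‖ := norm_nonneg y
  have hyz0 : 0 ≤ ‖y - z‖ := norm_nonneg _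
  by_cases h : ‖z‖ ≤ γ
  · simp only [hystar, if_pos h]
    simp only [zero_sub, norm_zero, norm_neg, mul_zero, add_zero]
    nlinarith [sq_nonneg (‖y‖), hprod, mul_nonneg hy0 (sub_nonneg.mpr h)]
  · push_neg at h
    set r := ‖z‖ with hr
    have hrpos : 0 < r := lt_trans hγ h
    have h1 : ystar = (((r - γ) / r : ℝ) : ℂ) * z := by rw [hystar, if_neg (not_le.mpr h)]
    have habs1 : ‖ystar‖ = r - γ := by
      rw [h1, norm_mul, ← hr, Complex.norm_real, Real.norm_eq_abs, abs_of_nonneg (div_nonneg (by linarith) hrpos.le)]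
      field_simp
    have h2 : ystar - z = ((-γ / r : ℝ) : ℂ) * z := by
      rw [h1]
      push_cast
      have : (r : ℂ) ≠ 0 := by exact_mod_cast hrpos.ne'
      field_simp
      ring
    have habs2 : ‖ystar - z‖ = γ := by
      rw [h2, norm_mul, ← hr, Complex.norm_real, Real.norm_eq_abs, abs_div, abs_neg, abs_of_nonneg hγ.le,
        abs_of_nonneg hrpos.le]
      field_simp
    rw [habs1, habs2]
    nlinarith [sq_nonneg (‖y‖ - (r - γ)), hprod]
end

section
/- Let γ > 0 and z ∈ ℂ. The function f(y) = γ·|y| + (1/2)·|y − z|² has a unique minimizer over ℂ, and this minimizer equals CS_γ(z): if y ∈ ℂ satisfies γ·|y| + (1/2)·|y − z|² ≤ γ·|w| + (1/2)·|w − z|² for all w ∈ ℂ, then y = CS_γ(z). -/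
/-- The complex soft-thresholding operator with threshold `γ`:
`CS_γ(z) = (z/|z|)·max(0, |z| − γ)` for `z ≠ 0`, and `CS_γ(0) = 0`. -/
noncomputable def CS (γ : ℝ) (z : ℂ) : ℂ :=
  if z = 0 then 0 else (z / (‖z‖ : ℂ)) * (max 0 (‖z‖ - γ) : ℝ)

private lemma CS_expand_sq (w z : ℂ) :
    (‖w - z‖) ^ 2 =
      (‖w‖) ^ 2 - 2 * (w * (starRingEnd ℂ) z).re + (‖z‖) ^ 2 := by
  rw [Complex.sq_norm, Complex.sq_norm, Complex.sq_norm, Complex.normSq_sub]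
  ring

private lemma CS_re_le (w z : ℂ) :
    (w * (starRingEnd ℂ) z).re ≤ ‖w‖ * ‖z‖ := by
  calc (w * (starRingEnd ℂ) z).re ≤ ‖w * (starRingEnd ℂ) z‖ :=
        Complex.re_le_norm _
    _ = ‖w‖ * ‖z‖ := by rw [norm_mul, Complex.norm_conj]

private lemma CS_key (γ : ℝ) (hγ : 0 < γ) (z w : ℂ) (hw : w ≠ CS γ z) :
    γ * ‖CS γ z‖ + (1 / 2) * (‖CS γ z - z‖) ^ 2 <
      γ * ‖w‖ + (1 / 2) * (‖w - z‖) ^ 2 := by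
  have hp := CS_re_le w z
  have hexp := CS_expand_sq w z
  set r := ‖z‖ with hr
  set s := ‖w‖ with hs
  set p := (w * (starRingEnd ℂ) z).re with hpdef
  have hs0 : 0 ≤ s := norm_nonneg w
  have hr0 : 0 ≤ r := norm_nonneg z
  by_cases hz : r ≤ γ
  · -- CS γ z = 0
    have hCS : CS γ z = 0 := by
      unfold CS
      split_ifs with h
      · rfl
      · have : max 0 (‖z‖ - γ) = 0 := max_eq_left (by rw [← hr]; linarith)
        rw [this]; simp
    rw [hCS] at hw ⊢
    have hwz : ‖0 - z‖ = r := by simp [hr]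
    rw [hwz]
    have hspos : 0 < s := by rw [hs]; exact norm_pos_iff.mpr hw
    have hps : p ≤ s * γ := le_trans hp (by nlinarith)
    simp only [norm_zero, mul_zero, zero_add]
    rw [hexp]; nlinarith
  · -- r > γ, z ≠ 0
    push_neg at hz
    have hzne : z ≠ 0 := by
      intro h
      rw [h] at hr
      simp at hr
      rw [hr] at hz
      linarith
    have hrpos : 0 < r := norm_pos_iff.mpr hzne
    have hrC : (r : ℂ) ≠ 0 := by exact_mod_cast hrpos.ne'
    have hmax : max 0 (‖z‖ - γ) = r - γ := max_eq_right (by rw [← hr]; linarith)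
    have hCS : CS γ z = (((r - γ) / r : ℝ) : ℂ) * z := by
      unfold CS
      rw [if_neg hzne, hmax]
      rw [← hr]
      push_cast
      field_simp
    have habsCS : ‖CS γ z‖ = r - γ := by
      rw [hCS, norm_mul, Complex.norm_real, Real.norm_eq_abs, ← hr,
        abs_of_nonneg (div_nonneg (by linarith) hr0)]
      field_simp
    have habsCSz : ‖CS γ z - z‖ = γ := by
      have h1 : CS γ z - z = (((-γ) / r : ℝ) : ℂ) * z := by
        rw [hCS]; push_cast; field_simp; ring
      rw [h1, norm_mul, Complex.norm_real, Real.norm_eq_abs, ← hr]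
      rw [abs_div, abs_neg, abs_of_nonneg hγ.le, abs_of_pos hrpos]
      field_simp
    rw [habsCS, habsCSz, hexp]
    rcases lt_or_eq_of_le hp with hlt | heq
    · nlinarith [sq_nonneg (s - r + γ)]
    · -- p = s*r : w is a nonneg multiple of z
      by_cases hseq : s = r - γ
      · exfalso
        apply hw
        -- show w = CS γ z
        have him : (w * (starRingEnd ℂ) z).im = 0 := by
          have h1 : ‖w * (starRingEnd ℂ) z‖ = s * r := by
            rw [norm_mul, Complex.norm_conj, ← hs, ← hr]
          have h2 := Complex.sq_norm (w * (starRingEnd ℂ) z)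
          rw [h1, Complex.normSq_apply] at h2
          have h3 : (w * (starRingEnd ℂ) z).re = s * r := by rw [← hpdef, ← heq]
          nlinarith [h2, h3]
        have hwz : w * (starRingEnd ℂ) z = ((s * r : ℝ) : ℂ) := by
          apply Complex.ext
          · simp only [Complex.ofReal_re]
            rw [hpdef] at heq
            exact heq
          · simpa using him
        have hc : (starRingEnd ℂ) z * z = ((r : ℂ)) ^ 2 := by
          rw [mul_comm, Complex.mul_conj]
          rw [← Complex.sq_norm, ← hr]
          push_cast
          ring
        have h3 : w * ((r : ℂ)) ^ 2 = ((s : ℂ) * (r : ℂ)) * z := by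
          have h4 := congrArg (· * z) hwz
          rw [mul_assoc, hc] at h4
          rw [h4]; push_cast; ring
        rw [hCS]
        apply mul_right_cancel₀ (pow_ne_zero 2 hrC)
        rw [h3, hseq]
        push_cast
        field_simp
      · -- s ≠ r - γ : strict
        have hne : s - r + γ ≠ 0 := fun h => hseq (by linarith)
        have h2 : 0 < (s - r + γ) ^ 2 :=
          (sq_nonneg _).lt_of_ne (Ne.symm (pow_ne_zero 2 hne))
        nlinarith [h2, heq]

/-- For `γ > 0` and `z ∈ ℂ`, the function
`f(y) = γ·|y| + (1/2)·|y − z|²` has a unique minimizer over `ℂ`, and this minimizer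
equals `CS_γ(z)`: any global minimizer `y` must equal `CS_γ(z)`. -/
theorem complex_soft_thresholding_unique_minimizer
    (γ : ℝ) (hγ : 0 < γ) (z : ℂ) :
    (∃! y : ℂ, ∀ w : ℂ,
        γ * ‖y‖ + (1 / 2) * (‖y - z‖) ^ 2 ≤
          γ * ‖w‖ + (1 / 2) * (‖w - z‖) ^ 2) ∧
      ∀ y : ℂ,
        (∀ w : ℂ,
            γ * ‖y‖ + (1 / 2) * (‖y - z‖) ^ 2 ≤
              γ * ‖w‖ + (1 / 2) * (‖w - z‖) ^ 2) →
          y = CS γ z := by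
  have hmin : ∀ w : ℂ,
      γ * ‖CS γ z‖ + (1 / 2) * (‖CS γ z - z‖) ^ 2 ≤
        γ * ‖w‖ + (1 / 2) * (‖w - z‖) ^ 2 := by
    intro w
    by_cases h : w = CS γ z
    · rw [h]
    · exact (CS_key γ hγ z w h).le
  have huniq : ∀ y : ℂ,
      (∀ w : ℂ,
          γ * ‖y‖ + (1 / 2) * (‖y - z‖) ^ 2 ≤
            γ * ‖w‖ + (1 / 2) * (‖w - z‖) ^ 2) →
        y = CS γ z := by
    intro y hy
    by_contra h
    exact absurd (hy (CS γ z)) (not_le.mpr (CS_key γ hγ z y h))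
  exact ⟨⟨CS γ z, hmin, huniq⟩, huniq⟩
end

section
/- Let λ > 0, ρ > 0, let m, n be positive natural numbers, and let X, U ∈ ℂ^{m×n} be complex matrices. Define Y ∈ ℂ^{m×n} entrywise by Y_{ij} = CS_{λ/ρ}(X_{ij} + U_{ij}). Then Y is a global minimizer over W ∈ ℂ^{m×n} of the objective λ·Σ_{i,j} |W_{ij}| + (ρ/2)·Σ_{i,j} |X_{ij} − W_{ij} + U_{ij}|². -/
lemma CS_scalar_min (γ : ℝ) (hγ : 0 ≤ γ) (v w : ℂ) :
    γ * ‖CS γ v‖ + (1/2) * ‖v - CS γ v‖ ^ 2 ≤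
      γ * ‖w‖ + (1/2) * ‖v - w‖ ^ 2 := by
  by_cases hv : v = 0
  · have hCS0 : CS γ 0 = 0 := by simp [CS]
    subst hv
    rw [hCS0]
    simp only [map_zero, norm_zero, norm_neg, mul_zero, sub_zero, zero_sub, map_neg_eq_map, zero_pow, zero_add]
    have h1 : 0 ≤ ‖w‖ := norm_nonneg w
    nlinarith [sq_nonneg (‖w‖)]
  · set a := ‖v‖ with ha_def
    have ha : 0 < a := norm_pos_iff.mpr hv
    set t := max 0 (a - γ) with ht_def
    have ht0 : 0 ≤ t := le_max_left _ _
    have hta : t ≤ a := max_le ha.le (by linarith)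
    have hCS : CS γ v = (v / (a : ℂ)) * (t : ℂ) := by simp [CS, hv]; rfl
    have habsCS : ‖CS γ v‖ = t := by
      rw [hCS, norm_mul, norm_div]
      simp [Complex.norm_real, abs_of_pos ha, abs_of_nonneg ht0, div_self ha.ne']
      rw [← ha_def, div_self ha.ne', one_mul]
    have hsub : ‖v - CS γ v‖ = a - t := by
      have hv' : v - CS γ v = v * (((a - t) / a : ℝ) : ℂ) := by
        rw [hCS]
        have : (a : ℂ) ≠ 0 := by exact_mod_cast ha.ne'
        push_cast
        field_simp
      have habs2 : ‖((((a - t) / a : ℝ)) : ℂ)‖ = (a - t) / a := by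
        rw [Complex.norm_real, Real.norm_eq_abs]
        exact abs_of_nonneg (div_nonneg (by linarith) ha.le)
      rw [hv', norm_mul, habs2, ← ha_def]
      field_simp
    set s := ‖w‖ with hs_def
    have hs0 : 0 ≤ s := norm_nonneg w
    have hkey : (a - s) ^ 2 ≤ ‖v - w‖ ^ 2 := by
      have h1 : |a - s| ≤ ‖v - w‖ := by
        simpa [ha_def, hs_def] using abs_norm_sub_norm_le v w
      calc (a - s) ^ 2 = |a - s| ^ 2 := (sq_abs _).symm
        _ ≤ ‖v - w‖ ^ 2 := by
            exact pow_le_pow_left₀ (abs_nonneg _) h1 2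
    rw [habsCS, hsub]
    rcases le_or_gt a γ with h | h
    · have ht : t = 0 := max_eq_left (by linarith)
      nlinarith
    · have ht : t = a - γ := max_eq_right (by linarith)
      rw [ht]
      nlinarith [hkey, sq_nonneg (s - a + γ)]

/-- For `λ, ρ > 0` and complex matrices `X, U ∈ ℂ^{m×n}`, the matrix
`Y` defined entrywise by `Y_{ij} = CS_{λ/ρ}(X_{ij} + U_{ij})` is a global minimizer of
`W ↦ λ·Σ_{i,j} |W_{ij}| + (ρ/2)·Σ_{i,j} |X_{ij} − W_{ij} + U_{ij}|²`. -/
theorem complex_soft_thresholding_matrix_minimizer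
    (lam ρ : ℝ) (hlam : 0 < lam) (hρ : 0 < ρ)
    (m n : ℕ) (hm : 0 < m) (hn : 0 < n)
    (X U : Matrix (Fin m) (Fin n) ℂ)
    (Y : Matrix (Fin m) (Fin n) ℂ)
    (hY : ∀ i j, Y i j = CS (lam / ρ) (X i j + U i j)) :
    ∀ W : Matrix (Fin m) (Fin n) ℂ,
      lam * (∑ i, ∑ j, ‖Y i j‖) +
          (ρ / 2) * (∑ i, ∑ j, (‖X i j - Y i j + U i j‖) ^ 2) ≤
        lam * (∑ i, ∑ j, ‖W i j‖) +
          (ρ / 2) * (∑ i, ∑ j, (‖X i j - W i j + U i j‖) ^ 2) := by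
  intro W
  have hentry : ∀ i j,
      lam * ‖Y i j‖ + (ρ / 2) * (‖X i j - Y i j + U i j‖) ^ 2 ≤
        lam * ‖W i j‖ + (ρ / 2) * (‖X i j - W i j + U i j‖) ^ 2 := by
    intro i j
    have hγ : 0 ≤ lam / ρ := le_of_lt (div_pos hlam hρ)
    have h := CS_scalar_min (lam / ρ) hγ (X i j + U i j) (W i j)
    rw [← hY i j] at h
    have h2 : X i j - Y i j + U i j = (X i j + U i j) - Y i j := by ring
    have h3 : X i j - W i j + U i j = (X i j + U i j) - W i j := by ring
    rw [h2, h3]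
    have := mul_le_mul_of_nonneg_left h hρ.le
    calc lam * ‖Y i j‖ + ρ / 2 * ‖(X i j + U i j) - Y i j‖ ^ 2
        = ρ * (lam / ρ * ‖Y i j‖
            + 1/2 * ‖(X i j + U i j) - Y i j‖ ^ 2) := by
          field_simp
      _ ≤ ρ * (lam / ρ * ‖W i j‖
            + 1/2 * ‖(X i j + U i j) - W i j‖ ^ 2) := this
      _ = lam * ‖W i j‖ + ρ / 2 * ‖(X i j + U i j) - W i j‖ ^ 2 := by
          field_simp
  have hL : ∀ (Z : Matrix (Fin m) (Fin n) ℂ),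
      lam * (∑ i, ∑ j, ‖Z i j‖) +
        (ρ / 2) * (∑ i, ∑ j, (‖X i j - Z i j + U i j‖) ^ 2) =
      ∑ i, ∑ j, (lam * ‖Z i j‖
        + (ρ / 2) * (‖X i j - Z i j + U i j‖) ^ 2) := by
    intro Z
    rw [Finset.mul_sum, Finset.mul_sum, ← Finset.sum_add_distrib]
    congr 1
    ext i
    rw [Finset.mul_sum, Finset.mul_sum, ← Finset.sum_add_distrib]
  rw [hL Y, hL W]
  exact Finset.sum_le_sum fun i _ => Finset.sum_le_sum fun j _ => hentry i j
end
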